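/- Suppose Q = ∑_{i=1}^m ℓ_i b_i b_iᵀ with ℓ_i > 0 and b_i ∈ ℤ^g, and suppose for a given u ∈ ℤ^g there exists w ∈ ℤ^g with w ≡ u mod 2 and b_iᵀw ∈ {0, 1, -1} for all i. Then Θ_u(Q) = -(1/4)·∑_{i : b_iᵀu odd} ℓ_i. -/

import Mathlib

/-!
With `Q = ∑ ℓᵢ bᵢ bᵢᵀ`, the quadratic form at `λ + u/2` equals `∑ ℓᵢ (bᵢᵀ(2λ + u) / 2)²`, and
`bᵢᵀ(2λ + u) ≡ bᵢᵀu (mod 2)`. An odd integer `k` has `(k/2)² ≥ 1/4`, so every `i` with `bᵢᵀu` odd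
contributes at least `ℓᵢ/4`, which bounds `Θ_u(Q)` from above. At `λ = (w - u)/2` we get
`2λ + u = w`, and since `bᵢᵀw ∈ {0, ±1}` each such term is exactly `ℓᵢ/4` and the others vanish.
-/

open Matrix

/-- The tropical theta constant `Θ_u(Q) = max_{λ ∈ ℤ^g} -(λ+u/2)ᵀQ(λ+u/2)`. -/
noncomputable def tropThetaConst (g : ℕ) (Q : Matrix (Fin g) (Fin g) ℝ) (u : Fin g → ℤ) : ℝ :=
  sSup (Set.range fun lam : Fin g → ℤ =>
    -((fun j => (lam j : ℝ) + (u j : ℝ) / 2) ⬝ᵥ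
        Q.mulVec (fun j => (lam j : ℝ) + (u j : ℝ) / 2)))

open Finset

theorem dotProduct_sum_smul_vecMulVec_self_mulVec {ι n R : Type*} [Fintype ι] [Fintype n]
    [CommSemiring R] (ℓ : ι → R) (v : ι → n → R) (x : n → R) :
    x ⬝ᵥ (∑ i, ℓ i • vecMulVec (v i) (v i)) *ᵥ x = ∑ i, ℓ i * (v i ⬝ᵥ x) ^ 2 := by
  simp only [sum_mulVec, dotProduct_sum, smul_mulVec, vecMulVec_mulVec, dotProduct_smul,
    smul_eq_mul, MulOpposite.smul_eq_mul_unop, MulOpposite.unop_op, dotProduct_comm x (v _)]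
  exact Finset.sum_congr rfl fun i _ => by ring

theorem odd_dotProduct_two_smul_add_iff {n : Type*} [Fintype n] (b lam u : n → ℤ) :
    Odd (b ⬝ᵥ (2 • lam + u)) ↔ Odd (b ⬝ᵥ u) := by
  rw [dotProduct_add, dotProduct_smul, ← Int.not_even_iff_odd, ← Int.not_even_iff_odd,
    Int.even_add]
  simp

theorem intCast_dotProduct_add_half {n : Type*} [Fintype n] (b lam u : n → ℤ) :
    (fun j => (b j : ℝ)) ⬝ᵥ (fun j => (lam j : ℝ) + (u j : ℝ) / 2)
      = ((b ⬝ᵥ (2 • lam + u) : ℤ) : ℝ) / 2 := by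
  simp only [dotProduct, Pi.add_apply, Pi.smul_apply, Int.cast_sum, Finset.sum_div]
  exact Finset.sum_congr rfl fun j _ => by rw [nsmul_eq_mul]; push_cast; ring

theorem quarter_le_sq_half_of_odd {k : ℤ} (hk : Odd k) : (1 / 4 : ℝ) ≤ ((k : ℝ) / 2) ^ 2 := by
  obtain ⟨m, rfl⟩ := hk
  have hm : (0 : ℝ) ≤ m * (m + 1) := by
    exact_mod_cast (le_or_gt 0 m).elim (fun h => by positivity) fun h => by nlinarith
  push_cast
  nlinarith

theorem sq_half_eq_of_eq_zero_or_eq_one_or_eq_neg_one {k : ℤ} (hk : k = 0 ∨ k = 1 ∨ k = -1) :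
    ((k : ℝ) / 2) ^ 2 = if Odd k then 1 / 4 else 0 := by
  rcases hk with rfl | rfl | rfl <;> norm_num

section WeightedSquares

variable {ι : Type*} [Fintype ι] (ℓ : ι → ℝ) (k : ι → ℤ)

theorem quarter_mul_sum_odd_le_sum_mul_sq_half (hℓ : ∀ i, 0 ≤ ℓ i) :
    1 / 4 * ∑ i ∈ univ.filter (fun i => Odd (k i)), ℓ i ≤ ∑ i, ℓ i * ((k i : ℝ) / 2) ^ 2 := by
  rw [Finset.mul_sum, Finset.sum_filter]
  refine Finset.sum_le_sum fun i _ => ?_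
  split_ifs with hodd
  · nlinarith [quarter_le_sq_half_of_odd hodd, hℓ i]
  · exact mul_nonneg (hℓ i) (sq_nonneg _)

theorem sum_mul_sq_half_of_eq_zero_or_eq_one_or_eq_neg_one
    (hk : ∀ i, k i = 0 ∨ k i = 1 ∨ k i = -1) :
    ∑ i, ℓ i * ((k i : ℝ) / 2) ^ 2 = 1 / 4 * ∑ i ∈ univ.filter (fun i => Odd (k i)), ℓ i := by
  simp only [sq_half_eq_of_eq_zero_or_eq_one_or_eq_neg_one (hk _), Finset.mul_sum,
    Finset.sum_filter, mul_ite, mul_zero]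
  exact Finset.sum_congr rfl fun i _ => by split_ifs <;> ring

end WeightedSquares

theorem stmt11 (g m : ℕ) (b : Fin m → (Fin g → ℤ)) (ℓ : Fin m → ℝ)
    (hℓ : ∀ i, 0 < ℓ i)
    (Q : Matrix (Fin g) (Fin g) ℝ)
    (hQ : Q = ∑ i : Fin m, ℓ i •
      Matrix.vecMulVec (fun j => ((b i j : ℤ) : ℝ)) (fun j => ((b i j : ℤ) : ℝ)))
    (u w : Fin g → ℤ)
    (hwu : ∀ j, Even (w j - u j))
    (hw : ∀ i, b i ⬝ᵥ w = 0 ∨ b i ⬝ᵥ w = 1 ∨ b i ⬝ᵥ w = -1) :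
    tropThetaConst g Q u =
      -(1 / 4) * ∑ i ∈ Finset.univ.filter (fun i => Odd (b i ⬝ᵥ u)), ℓ i := by
  have hvalue : ∀ lam : Fin g → ℤ,
      -((fun j => (lam j : ℝ) + (u j : ℝ) / 2) ⬝ᵥ Q *ᵥ (fun j => (lam j : ℝ) + (u j : ℝ) / 2))
        = -∑ i, ℓ i * (((b i ⬝ᵥ (2 • lam + u) : ℤ) : ℝ) / 2) ^ 2 := fun lam => by
    rw [hQ, dotProduct_sum_smul_vecMulVec_self_mulVec]
    simp only [intCast_dotProduct_add_half]
  have hfilter : ∀ lam : Fin g → ℤ, univ.filter (fun i => Odd (b i ⬝ᵥ (2 • lam + u)))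
      = univ.filter (fun i => Odd (b i ⬝ᵥ u)) := fun lam =>
    Finset.filter_congr fun i _ => odd_dotProduct_two_smul_add_iff (b i) lam u
  have hshift : 2 • (fun j => (w j - u j) / 2) + u = w := by
    ext j
    obtain ⟨k, hk⟩ := hwu j
    simp only [Pi.add_apply, two_nsmul]
    omega
  refine IsGreatest.csSup_eq ⟨⟨fun j => (w j - u j) / 2, ?_⟩, ?_⟩
  · dsimp only
    rw [hvalue, hshift, sum_mul_sq_half_of_eq_zero_or_eq_one_or_eq_neg_one _ _ hw, ← hshift, hfilter]
    ring
  · rintro _ ⟨lam, rfl⟩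
    dsimp only
    rw [hvalue, neg_mul, neg_le_neg_iff, ← hfilter lam]
    exact quarter_mul_sum_odd_le_sum_mul_sq_half ℓ _ fun i => (hℓ i).le
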